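/- Let β and γ be positive real numbers and let ν ∈ ℝ. Then ∫₀^∞ x^{ν−1} e^{−(β x^{−1} + γ x)/2} dx = 2 (β/γ)^{ν/2} K_ν(√(βγ)). -/
import Mathlib

open MeasureTheory Real

/-- Modified Bessel function of the second kind, integral representation. -/
noncomputable def besselK (ν z : ℝ) : ℝ :=
  ∫ t in Set.Ioi (0:ℝ), Real.exp (-z * Real.cosh t) * Real.cosh (ν * t)

lemma cosh_quad_bound (t : ℝ) : 1 + t^2/2 ≤ Real.cosh t := by
  have h1 : Real.cosh t = 2 * Real.sinh (t/2)^2 + 1 := by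
    have h := Real.cosh_two_mul (t/2)
    have h' := Real.cosh_sq (t/2)
    have h0 : Real.cosh t = Real.cosh (2*(t/2)) := by ring_nf
    nlinarith [h]
  have h2 : (t/2)^2 ≤ Real.sinh (t/2)^2 := by
    rcases le_or_gt 0 t with h | h
    · have := Real.self_le_sinh_iff.mpr (by linarith : (0:ℝ) ≤ t/2)
      nlinarith
    · have := Real.self_le_sinh_iff.mpr (by linarith : (0:ℝ) ≤ -(t/2))
      rw [Real.sinh_neg] at this
      nlinarith
  nlinarith

lemma integrable_aux {z : ℝ} (a : ℝ) (hz : 0 < z) :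
    Integrable (fun t : ℝ => Real.exp (-z * Real.cosh t) * Real.exp (a * t)) := by
  have hmaj : Integrable (fun t : ℝ =>
      Real.exp (a^2/(2*z) - z) * Real.exp (-(z/2) * (t - a/z)^2)) :=
    ((integrable_exp_neg_mul_sq (by positivity : (0:ℝ) < z/2)).comp_sub_right (a/z)).const_mul _
  refine hmaj.mono' ?_ ?_
  · exact (((Real.continuous_exp.comp (continuous_const.mul Real.continuous_cosh)).mul
      (Real.continuous_exp.comp (continuous_const.mul continuous_id)))).aestronglyMeasurable
  · filter_upwards with t
    rw [Real.norm_eq_abs, abs_of_nonneg (by positivity), ← Real.exp_add, ← Real.exp_add]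
    apply Real.exp_le_exp.mpr
    have hc := cosh_quad_bound t
    have key : a^2/(2*z) - z + (-(z/2) * (t - a/z)^2) = -z*(1+t^2/2) + a*t := by
      field_simp
      ring
    rw [key]
    nlinarith

theorem integral_rpow_exp_eq_besselK (β γ ν : ℝ) (hβ : 0 < β) (hγ : 0 < γ) :
    ∫ x in Set.Ioi (0:ℝ), x ^ (ν - 1) * Real.exp (-(β * x⁻¹ + γ * x) / 2)
      = 2 * (β / γ) ^ (ν / 2) * besselK ν (Real.sqrt (β * γ)) := by
  set z := Real.sqrt (β * γ) with hzdef
  have hz : 0 < z := Real.sqrt_pos.mpr (by positivity)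
  set c := Real.sqrt (β / γ) with hcdef
  have hc : 0 < c := Real.sqrt_pos.mpr (by positivity)
  have hcz : c * z = β := by
    rw [hcdef, hzdef, ← Real.sqrt_mul (by positivity) (β * γ),
      show β / γ * (β * γ) = β ^ 2 by field_simp]
    exact Real.sqrt_sq hβ.le
  have hz2 : z ^ 2 = β * γ := Real.sq_sqrt (by positivity)
  have hgc : γ * c = z := by
    apply mul_right_cancel₀ hz.ne'
    linear_combination γ * hcz - hz2
  -- substitution x = c * exp t
  have himg : (fun t : ℝ => c * Real.exp t) '' Set.univ = Set.Ioi 0 := by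
    ext x
    simp only [Set.image_univ, Set.mem_range, Set.mem_Ioi]
    constructor
    · rintro ⟨t, rfl⟩; positivity
    · intro hx
      exact ⟨Real.log (x / c), by rw [Real.exp_log (by positivity)]; field_simp⟩
  have hsub := integral_image_eq_integral_abs_deriv_smul (f := fun t : ℝ => c * Real.exp t)
    (f' := fun t : ℝ => c * Real.exp t) MeasurableSet.univ
    (fun t _ => ((Real.hasDerivAt_exp t).const_mul c).hasDerivWithinAt)
    (fun t₁ _ t₂ _ h => Real.exp_injective (mul_left_cancel₀ hc.ne' h))
    (fun x => x ^ (ν - 1) * Real.exp (-(β * x⁻¹ + γ * x) / 2))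
  rw [himg, Measure.restrict_univ] at hsub
  have hpt : ∀ t : ℝ, |c * Real.exp t| •
      ((c * Real.exp t) ^ (ν - 1) * Real.exp (-(β * (c * Real.exp t)⁻¹ + γ * (c * Real.exp t)) / 2))
      = c ^ ν * (Real.exp (-z * Real.cosh t) * Real.exp (ν * t)) := by
    intro t
    have he : (0:ℝ) < Real.exp t := Real.exp_pos t
    rw [smul_eq_mul, abs_of_pos (by positivity)]
    have h1 : (c * Real.exp t) ^ (ν - 1) = c ^ (ν - 1) * Real.exp ((ν - 1) * t) := by
      rw [Real.mul_rpow hc.le he.le, Real.rpow_def_of_pos he, Real.log_exp, mul_comm t]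
    have h2 : -(β * (c * Real.exp t)⁻¹ + γ * (c * Real.exp t)) / 2 = -z * Real.cosh t := by
      rw [Real.cosh_eq, Real.exp_neg]
      have hb' : β * (c * Real.exp t)⁻¹ = z * (Real.exp t)⁻¹ := by
        rw [← hcz]; field_simp
      have hg' : γ * (c * Real.exp t) = z * Real.exp t := by
        rw [← hgc]; ring
      rw [hb', hg']
      ring
    rw [h1, h2]
    have h3 : c ^ ν = c ^ (ν - 1) * c := by
      rw [← Real.rpow_add_one hc.ne' (ν - 1)]; ring_nf
    have h4 : Real.exp (ν * t) = Real.exp ((ν - 1) * t) * Real.exp t := by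
      rw [← Real.exp_add]; ring_nf
    rw [h3, h4]
    ring
  have hstep : (∫ x in Set.Ioi (0:ℝ), x ^ (ν - 1) * Real.exp (-(β * x⁻¹ + γ * x) / 2))
      = c ^ ν * ∫ t : ℝ, Real.exp (-z * Real.cosh t) * Real.exp (ν * t) := by
    rw [hsub, ← integral_const_mul]
    exact integral_congr_ae (Filter.Eventually.of_forall fun t => hpt t)
  -- splitting the real line
  have hIν := integrable_aux ν hz
  have hsplit : (∫ t : ℝ, Real.exp (-z * Real.cosh t) * Real.exp (ν * t))
      = (∫ t in Set.Ioi (0:ℝ), Real.exp (-z * Real.cosh t) * Real.exp (ν * t))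
        + ∫ t in Set.Ioi (0:ℝ), Real.exp (-z * Real.cosh t) * Real.exp (-ν * t) := by
    rw [← integral_add_compl measurableSet_Ioi hIν, Set.compl_Ioi]
    congr 1
    have := integral_comp_neg_Ioi (0:ℝ)
      (fun t => Real.exp (-z * Real.cosh t) * Real.exp (ν * t))
    rw [neg_zero] at this
    rw [← this]
    refine setIntegral_congr_fun measurableSet_Ioi fun t _ => ?_
    rw [Real.cosh_neg]
    ring_nf
  have hb2 : 2 * besselK ν z
      = (∫ t in Set.Ioi (0:ℝ), Real.exp (-z * Real.cosh t) * Real.exp (ν * t))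
        + ∫ t in Set.Ioi (0:ℝ), Real.exp (-z * Real.cosh t) * Real.exp (-ν * t) := by
    have hIν' : IntegrableOn (fun t => Real.exp (-z * Real.cosh t) * Real.exp (-ν * t))
        (Set.Ioi (0:ℝ)) := by
      have := (integrable_aux (-ν) hz).integrableOn (s := Set.Ioi (0:ℝ))
      simpa using this
    rw [besselK, ← integral_add hIν.integrableOn hIν', ← integral_const_mul]
    refine setIntegral_congr_fun measurableSet_Ioi fun t _ => ?_
    rw [Real.cosh_eq (ν * t)]
    rw [show -(ν * t) = -ν * t by ring]
    ring
  have hpow : (β / γ) ^ (ν / 2) = c ^ ν := by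
    rw [hcdef, Real.sqrt_eq_rpow, ← Real.rpow_mul (by positivity : (0:ℝ) ≤ β / γ)]
    congr 1
    ring
  rw [hstep, hsplit, ← hb2, hpow]
  ring
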